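/- If (i,j) ≥ (0,0) and (k,l) ≥ (0,0) in the lexicographic-from-the-right order on ℤ², then the set product (I·η^{(1)}_{i,j}·I)·(I·η^{(1)}_{k,l}·I) equals the single double coset I·η^{(1)}_{i+k, j+l}·I, where η^{(1)}_{m,n} = diag(t1^m t2^n, t1^{-m} t2^{-n}). -/

import Mathlib

set_option linter.unusedSectionVars false
set_option maxHeartbeats 1000000


noncomputable section

/-- The 2-dimensional local field `F = 𝔽_q((t1))((t2))` (iterated Laurent series). -/
abbrev F2 (Fq : Type) [Field Fq] : Type := LaurentSeries (LaurentSeries Fq)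

variable (Fq : Type) [Field Fq] [Fintype Fq]

/-- The local parameter `t1`. -/
def t1 : F2 Fq := HahnSeries.single 0 (HahnSeries.single 1 1)

/-- The local parameter `t2`. -/
def t2 : F2 Fq := HahnSeries.single 1 1

/-- The rank-two valuation `v(x) = (v1 x, v2 x)` of a nonzero `x` (junk value at `0`):
`v2 x` is the `t2`-adic order of `x`, and `v1 x` is the `t1`-adic order of the leading
`t2`-coefficient of `x`. -/
def vv (x : F2 Fq) : ℤ × ℤ := ((x.coeff x.order).order, x.order)

/-- The lexicographic-from-the-right (non-strict) order on `ℤ²`. -/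
def lexle (a b : ℤ × ℤ) : Prop := a.2 < b.2 ∨ (a.2 = b.2 ∧ a.1 ≤ b.1)

/-- The lexicographic-from-the-right strict order on `ℤ²`. -/
def lexlt (a b : ℤ × ℤ) : Prop := a.2 < b.2 ∨ (a.2 = b.2 ∧ a.1 < b.1)

/-- `v(x) ≤ v(y)`, with the convention `v(0) = ∞`. -/
def vle (x y : F2 Fq) : Prop := x ≠ 0 ∧ (y = 0 ∨ lexle (vv Fq x) (vv Fq y))

/-- `v(x) < v(y)`, with the convention `v(0) = ∞`. -/
def vlt (x y : F2 Fq) : Prop := x ≠ 0 ∧ (y = 0 ∨ lexlt (vv Fq x) (vv Fq y))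

/-- The rank-two valuation ring `O` of `F`. -/
def Oring : Set (F2 Fq) := {x | x = 0 ∨ lexle (0, 0) (vv Fq x)}

/-- `SL₂(F)` as the set of 2×2 matrices of determinant 1. -/
def SL2 : Set (Matrix (Fin 2) (Fin 2) (F2 Fq)) := {g | g.det = 1}

/-- The (double) Iwahori subgroup `I ⊆ SL₂(O)`: entries in `O`, lower-left entry in `t1·O`. -/
def Iwahori : Set (Matrix (Fin 2) (Fin 2) (F2 Fq)) :=
  {g | g.det = 1 ∧ (∀ i j, g i j ∈ Oring Fq) ∧ ∃ y ∈ Oring Fq, g 1 0 = t1 Fq * y}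

/-- The matrix `η^{(1)}_{i,j} = diag(t1^i t2^j, t1^{-i} t2^{-j})`. -/
def eta1 (i j : ℤ) : Matrix (Fin 2) (Fin 2) (F2 Fq) :=
  !![t1 Fq ^ i * t2 Fq ^ j, 0; 0, t1 Fq ^ (-i) * t2 Fq ^ (-j)]

/-- The matrix `η^{(2)}_{i,j} = (0, t1^i t2^j; -t1^{-i} t2^{-j}, 0)`. -/
def eta2 (i j : ℤ) : Matrix (Fin 2) (Fin 2) (F2 Fq) :=
  !![0, t1 Fq ^ i * t2 Fq ^ j; -(t1 Fq ^ (-i) * t2 Fq ^ (-j)), 0]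

/-- The double coset `I·η·I`. -/
def doubleCoset (η : Matrix (Fin 2) (Fin 2) (F2 Fq)) : Set (Matrix (Fin 2) (Fin 2) (F2 Fq)) :=
  {x | ∃ g ∈ Iwahori Fq, ∃ h ∈ Iwahori Fq, x = g * η * h}

/-- The right coset `I·z`. -/
def rcoset (z : Matrix (Fin 2) (Fin 2) (F2 Fq)) : Set (Matrix (Fin 2) (Fin 2) (F2 Fq)) :=
  {x | ∃ g ∈ Iwahori Fq, x = g * z}

-- ===== auxiliary development =====


instance : IsRightCancelAdd (F2 Fq) :=
  ⟨fun a b c h => by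
    exact (add_neg_cancel_right b a).symm.trans
      ((congrArg (· + -a) h).trans (add_neg_cancel_right c a))⟩

lemma aux_add_order {K : Type} [Field K] (u v : HahnSeries ℤ K) (hu : u ≠ 0)
    (h : v = 0 ∨ u.order < v.order) :
    u + v ≠ 0 ∧ (u + v).order = u.order ∧ (u + v).coeff u.order = u.coeff u.order := by
  rcases eq_or_ne v 0 with rfl | hv
  · simp [hu]
  have hlt : u.order < v.order := h.resolve_left hv
  have hco : (u + v).coeff u.order = u.coeff u.order := by
    rw [HahnSeries.coeff_add, HahnSeries.coeff_eq_zero_of_lt_order hlt, add_zero]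
  have hco' : (u + v).coeff u.order ≠ 0 := by
    rw [hco]; exact HahnSeries.coeff_order_eq_zero.not.mpr hu
  have hne : u + v ≠ 0 := HahnSeries.ne_zero_of_coeff_ne_zero hco'
  refine ⟨hne, le_antisymm (HahnSeries.order_le_of_coeff_ne_zero hco') ?_, hco⟩
  calc u.order = min u.order v.order := (min_eq_left hlt.le).symm
    _ ≤ _ := HahnSeries.min_order_le_order_add hne

lemma aux_add_nonneg {K : Type} [Field K] (u v : HahnSeries ℤ K)
    (hu : u = 0 ∨ 0 ≤ u.order) (hv : v = 0 ∨ 0 ≤ v.order) (hs : u + v ≠ 0) :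
    0 ≤ (u + v).order := by
  rcases eq_or_ne u 0 with rfl | hu0
  · rw [zero_add] at hs ⊢; exact hv.resolve_left hs
  rcases eq_or_ne v 0 with rfl | hv0
  · rw [add_zero]; exact hu.resolve_left hu0
  exact le_trans (le_min (hu.resolve_left hu0) (hv.resolve_left hv0))
    (HahnSeries.min_order_le_order_add hs)

lemma one_ne : (1 : F2 Fq) ≠ 0 := by
  intro h
  have e1 : (1 : F2 Fq).coeff 0 = 1 := by rw [HahnSeries.coeff_one]; simp
  rw [h, HahnSeries.coeff_zero] at e1
  have h1 : (1 : LaurentSeries Fq) = 0 := e1.symm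
  have e2 : (1 : LaurentSeries Fq).coeff 0 = 1 := by rw [HahnSeries.coeff_one]; simp
  rw [h1, HahnSeries.coeff_zero] at e2
  exact one_ne_zero (α := Fq) e2.symm

lemma left_ne (a b : F2 Fq) (h : a * b = 1) : a ≠ 0 := by
  rintro rfl
  exact one_ne Fq ((zero_mul b).symm.trans h).symm

lemma right_ne (a b : F2 Fq) (h : a * b = 1) : b ≠ 0 := by
  rintro rfl
  exact one_ne Fq ((mul_zero a).symm.trans h).symm

lemma t1_ne : t1 Fq ≠ 0 :=
  HahnSeries.single_ne_zero (HahnSeries.single_ne_zero one_ne_zero)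

lemma t2_ne : t2 Fq ≠ 0 := HahnSeries.single_ne_zero one_ne_zero

lemma vv_mul (x y : F2 Fq) (hx : x ≠ 0) (hy : y ≠ 0) :
    vv Fq (x * y) = vv Fq x + vv Fq y := by
  have h2 : (x * y).order = x.order + y.order := HahnSeries.order_mul hx hy
  have hc : (x * y).coeff (x.order + y.order) = x.leadingCoeff * y.leadingCoeff :=
    HahnSeries.coeff_mul_order_add_order x y
  have hlx : x.leadingCoeff ≠ 0 := HahnSeries.leadingCoeff_ne_zero.mpr hx
  have hly : y.leadingCoeff ≠ 0 := HahnSeries.leadingCoeff_ne_zero.mpr hy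
  have h1 : ((x * y).coeff (x * y).order).order
      = x.leadingCoeff.order + y.leadingCoeff.order := by
    rw [h2, hc, HahnSeries.order_mul hlx hly]
  unfold vv
  rw [Prod.mk_add_mk, Prod.mk.injEq]
  exact ⟨by rw [h1, HahnSeries.leadingCoeff_eq, HahnSeries.leadingCoeff_eq], h2⟩

lemma vv_one : vv Fq 1 = (0, 0) := by
  unfold vv
  rw [HahnSeries.order_one]
  simp [HahnSeries.coeff_one, HahnSeries.order_one]

lemma vv_t1 : vv Fq (t1 Fq) = (1, 0) := by
  unfold vv t1
  rw [HahnSeries.order_single (HahnSeries.single_ne_zero (one_ne_zero (α := Fq))),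
    HahnSeries.coeff_single_same, HahnSeries.order_single (one_ne_zero (α := Fq))]

lemma vv_t2 : vv Fq (t2 Fq) = (0, 1) := by
  unfold vv t2
  rw [HahnSeries.order_single (one_ne_zero (α := LaurentSeries Fq)),
    HahnSeries.coeff_single_same, HahnSeries.order_one]

lemma tpow2 (x : F2 Fq) (hx : x ≠ 0) (m n : ℤ) : x ^ (m + n) = x ^ m * x ^ n :=
  zpow_add₀ (G₀ := F2 Fq) hx m n

lemma vv_pow (x : F2 Fq) (hx : x ≠ 0) :
    ∀ m : ℕ, x ^ m ≠ 0 ∧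
      vv Fq (x ^ m) = ((m : ℤ) * (vv Fq x).1, (m : ℤ) * (vv Fq x).2)
  | 0 => by
    have h0 : x ^ (0 : ℕ) = 1 := pow_zero x
    constructor
    · rw [h0]; exact one_ne Fq
    · rw [h0, vv_one]; simp
  | (m + 1) => by
    obtain ⟨hne, hv⟩ := vv_pow x hx m
    have hp : x ^ (m + 1) = x ^ m * x := pow_succ x m
    have hne' : x ^ (m + 1) ≠ 0 := by rw [hp]; exact mul_ne_zero hne hx
    refine ⟨hne', ?_⟩
    rw [hp, vv_mul Fq _ _ hne hx, hv]
    have heta : vv Fq x = ((vv Fq x).1, (vv Fq x).2) := rfl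
    rw [heta, Prod.mk_add_mk]
    simp only [Prod.mk.injEq]
    constructor <;> push_cast <;> ring

lemma vv_zpow (x : F2 Fq) (hx : x ≠ 0) (n : ℤ) :
    x ^ n ≠ 0 ∧ vv Fq (x ^ n) = (n * (vv Fq x).1, n * (vv Fq x).2) := by
  rcases n with m | m
  · have h : x ^ (Int.ofNat m) = x ^ m := zpow_natCast x m
    obtain ⟨hne, hv⟩ := vv_pow Fq x hx m
    refine ⟨by rw [h]; exact hne, ?_⟩
    rw [h, hv]
    simp only [Int.ofNat_eq_natCast]
  · have hadd : x ^ (Int.negSucc m) * x ^ (((m + 1 : ℕ) : ℤ)) = 1 := by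
      have h1 := (tpow2 Fq x hx (Int.negSucc m) ((m + 1 : ℕ) : ℤ)).symm
      have h2 : Int.negSucc m + ((m + 1 : ℕ) : ℤ) = 0 := by
        rw [Int.negSucc_eq]; push_cast; ring
      rw [h2] at h1
      exact h1.trans (zpow_zero x)
    have hne1 : x ^ (Int.negSucc m) ≠ 0 := left_ne Fq _ _ hadd
    have hne2 : x ^ (((m + 1 : ℕ) : ℤ)) ≠ 0 := right_ne Fq _ _ hadd
    have hvm := vv_mul Fq _ _ hne1 hne2
    rw [hadd, vv_one] at hvm
    have hc : x ^ (((m + 1 : ℕ) : ℤ)) = x ^ ((m + 1 : ℕ)) := zpow_natCast x (m + 1)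
    obtain ⟨_, hv⟩ := vv_pow Fq x hx (m + 1)
    rw [hc, hv] at hvm
    refine ⟨hne1, ?_⟩
    have h1 : (0 : ℤ) = (vv Fq (x ^ (Int.negSucc m))).1 + ((m + 1 : ℕ) : ℤ) * (vv Fq x).1 :=
      (Prod.ext_iff.mp hvm).1
    have h2 : (0 : ℤ) = (vv Fq (x ^ (Int.negSucc m))).2 + ((m + 1 : ℕ) : ℤ) * (vv Fq x).2 :=
      (Prod.ext_iff.mp hvm).2
    have heta : vv Fq (x ^ (Int.negSucc m))
        = ((vv Fq (x ^ (Int.negSucc m))).1, (vv Fq (x ^ (Int.negSucc m))).2) := rfl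
    have hneg : (Int.negSucc m : ℤ) = -((m : ℤ) + 1) := Int.negSucc_eq m
    rw [heta, Prod.mk.injEq]
    constructor
    · push_cast at h1; linear_combination -h1 - (vv Fq x).1 * hneg
    · push_cast at h2; linear_combination -h2 - (vv Fq x).2 * hneg

lemma vv_P (m n : ℤ) :
    t1 Fq ^ m * t2 Fq ^ n ≠ 0 ∧ vv Fq (t1 Fq ^ m * t2 Fq ^ n) = (m, n) := by
  obtain ⟨h1, hv1⟩ := vv_zpow Fq (t1 Fq) (t1_ne Fq) m
  obtain ⟨h2, hv2⟩ := vv_zpow Fq (t2 Fq) (t2_ne Fq) n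
  rw [vv_t1] at hv1
  rw [vv_t2] at hv2
  refine ⟨mul_ne_zero h1 h2, ?_⟩
  rw [vv_mul Fq _ _ h1 h2, hv1, hv2]
  simp only [Prod.mk_add_mk, Prod.mk.injEq]
  constructor <;> ring

-- ============ lex arithmetic ============

lemma lexle_scalar (p q : ℤ × ℤ) (h : lexle p q) :
    p.2 < q.2 ∨ (p.2 = q.2 ∧ p.1 ≤ q.1) := h

lemma lexle_of_scalar (p q : ℤ × ℤ) (h : p.2 < q.2 ∨ (p.2 = q.2 ∧ p.1 ≤ q.1)) :
    lexle p q := h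

lemma lexlt_scalar (p q : ℤ × ℤ) (h : lexlt p q) :
    p.2 < q.2 ∨ (p.2 = q.2 ∧ p.1 < q.1) := h

lemma lexlt_of_scalar (p q : ℤ × ℤ) (h : p.2 < q.2 ∨ (p.2 = q.2 ∧ p.1 < q.1)) :
    lexlt p q := h

lemma prod_add_fst (p q : ℤ × ℤ) : (p + q).1 = p.1 + q.1 := rfl
lemma prod_add_snd (p q : ℤ × ℤ) : (p + q).2 = p.2 + q.2 := rfl

lemma lex_nonneg_add (p q : ℤ × ℤ) (hp : lexle (0, 0) p) (hq : lexle (0, 0) q) :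
    lexle (0, 0) (p + q) := by
  have hp' := lexle_scalar _ _ hp
  have hq' := lexle_scalar _ _ hq
  refine lexle_of_scalar _ _ ?_
  rw [prod_add_fst, prod_add_snd]
  simp only [Prod.fst_zero, Prod.snd_zero] at *
  omega

lemma lex_unit (p q : ℤ × ℤ) (hp : lexle (0, 0) p) (hq : lexle (0, 0) q)
    (h : p + q = (0, 0)) : q = (0, 0) := by
  have hp' := lexle_scalar _ _ hp
  have hq' := lexle_scalar _ _ hq
  have h1 : p.1 + q.1 = 0 := (Prod.ext_iff.mp h).1
  have h2 : p.2 + q.2 = 0 := (Prod.ext_iff.mp h).2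
  have he : q = (q.1, q.2) := rfl
  rw [he]
  simp only [Prod.fst_zero, Prod.snd_zero] at *
  rw [Prod.mk.injEq]
  omega

-- ============ Oring lemmas ============

lemma o_zero : (0 : F2 Fq) ∈ Oring Fq := Or.inl rfl

lemma o_one : (1 : F2 Fq) ∈ Oring Fq := Or.inr (by rw [vv_one]; exact Or.inr ⟨rfl, le_refl 0⟩)

lemma o_mul (x y : F2 Fq) (hx : x ∈ Oring Fq) (hy : y ∈ Oring Fq) : x * y ∈ Oring Fq := by
  rcases eq_or_ne x 0 with rfl | hx0
  · exact Or.inl (zero_mul y)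
  rcases eq_or_ne y 0 with rfl | hy0
  · exact Or.inl (mul_zero x)
  right
  rw [vv_mul Fq x y hx0 hy0]
  exact lex_nonneg_add _ _ (hx.resolve_left hx0) (hy.resolve_left hy0)

lemma o_nonneg_order (x : F2 Fq) (hx : x ∈ Oring Fq) : x = 0 ∨ 0 ≤ x.order := by
  rcases eq_or_ne x 0 with rfl | hx0
  · exact Or.inl rfl
  right
  have h := lexle_scalar _ _ (hx.resolve_left hx0)
  simp only [Prod.fst_zero, Prod.snd_zero] at h
  have h2 : (vv Fq x).2 = x.order := rfl
  omega

lemma o_coeff0 (x : F2 Fq) (hx : x ∈ Oring Fq) :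
    x.coeff 0 = 0 ∨ 0 ≤ (x.coeff 0).order := by
  rcases eq_or_ne x 0 with rfl | hx0
  · exact Or.inl (HahnSeries.coeff_zero)
  have h := lexle_scalar _ _ (hx.resolve_left hx0)
  simp only [Prod.fst_zero, Prod.snd_zero] at h
  have h2 : (vv Fq x).2 = x.order := rfl
  have h1 : (vv Fq x).1 = (x.coeff x.order).order := rfl
  rcases lt_or_ge 0 x.order with hlt | hle
  · exact Or.inl (HahnSeries.coeff_eq_zero_of_lt_order hlt)
  · have ho : x.order = 0 := by omega
    right
    rw [← ho]
    omega

lemma o_add (x y : F2 Fq) (hx : x ∈ Oring Fq) (hy : y ∈ Oring Fq) : x + y ∈ Oring Fq := by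
  by_cases hs : x + y = 0
  · exact Or.inl hs
  right
  have houter : 0 ≤ (x + y).order :=
    aux_add_nonneg x y (o_nonneg_order Fq x hx) (o_nonneg_order Fq y hy) hs
  refine lexle_of_scalar _ _ ?_
  simp only [Prod.fst_zero, Prod.snd_zero]
  have h2 : (vv Fq (x + y)).2 = (x + y).order := rfl
  have h1 : (vv Fq (x + y)).1 = ((x + y).coeff (x + y).order).order := rfl
  rcases lt_or_ge 0 ((x + y).order) with hlt | hle
  · left; omega
  · have ho : (x + y).order = 0 := by omega
    right
    constructor
    · omega
    · rw [h1, ho]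
      have hsum : (x + y).coeff 0 = x.coeff 0 + y.coeff 0 := HahnSeries.coeff_add
      have hcne : (x + y).coeff 0 ≠ 0 := by
        rw [← ho]; exact HahnSeries.coeff_order_eq_zero.not.mpr hs
      rw [hsum] at hcne ⊢
      exact aux_add_nonneg _ _ (o_coeff0 Fq x hx) (o_coeff0 Fq y hy) hcne

lemma o_P (m n : ℤ) (h : lexle (0, 0) (m, n)) : t1 Fq ^ m * t2 Fq ^ n ∈ Oring Fq :=
  Or.inr (by rw [(vv_P Fq m n).2]; exact h)

lemma o_t1 : t1 Fq ∈ Oring Fq :=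
  Or.inr (by rw [vv_t1]; exact Or.inr ⟨rfl, by norm_num⟩)

-- ============ two-level addition ============

lemma vv_add_lt (x z : F2 Fq) (hx : x ≠ 0) (hz : z ≠ 0) (h : lexlt (vv Fq x) (vv Fq z)) :
    x + z ≠ 0 ∧ vv Fq (x + z) = vv Fq x := by
  have h' := lexlt_scalar _ _ h
  have hx2 : (vv Fq x).2 = x.order := rfl
  have hz2 : (vv Fq z).2 = z.order := rfl
  have hx1 : (vv Fq x).1 = (x.coeff x.order).order := rfl
  have hz1 : (vv Fq z).1 = (z.coeff z.order).order := rfl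
  rcases h' with hlt | ⟨heq, hlt⟩
  · obtain ⟨hne, hord, hco⟩ := aux_add_order x z hx (Or.inr (by omega))
    refine ⟨hne, ?_⟩
    unfold vv
    rw [hord, hco]
  · have heq' : x.order = z.order := by omega
    have hu : x.coeff x.order ≠ 0 := HahnSeries.coeff_order_eq_zero.not.mpr hx
    have hvz : z.coeff x.order = z.coeff z.order := by rw [heq']
    have hvne : z.coeff x.order ≠ 0 := by rw [hvz]; exact HahnSeries.coeff_order_eq_zero.not.mpr hz
    obtain ⟨hne0, hordu, hcou⟩ := aux_add_order (x.coeff x.order) (z.coeff x.order) hu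
      (Or.inr (by rw [hvz]; omega))
    have hsum : (x + z).coeff x.order = x.coeff x.order + z.coeff x.order :=
      HahnSeries.coeff_add
    have hcne : (x + z).coeff x.order ≠ 0 := by rw [hsum]; exact hne0
    have hne : x + z ≠ 0 := HahnSeries.ne_zero_of_coeff_ne_zero hcne
    have hord : (x + z).order = x.order := by
      refine le_antisymm (HahnSeries.order_le_of_coeff_ne_zero hcne) ?_
      have hmin := HahnSeries.min_order_le_order_add (x := x) (y := z) hne
      rw [← heq', min_self] at hmin
      exact hmin
    refine ⟨hne, ?_⟩
    unfold vv
    rw [hord, hsum, hordu]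


-- ============ units of O ============

lemma mul_ne' (a b : F2 Fq) (h : a * b ≠ 0) : a ≠ 0 ∧ b ≠ 0 :=
  ⟨fun ha => h (by rw [ha]; exact zero_mul b), fun hb => h (by rw [hb]; exact mul_zero a)⟩

lemma o_inv (x : F2 Fq) (hx : x ≠ 0) (hv : vv Fq x = (0, 0)) :
    ∃ e, x * e = 1 ∧ e ∈ Oring Fq := by
  have he : x * x⁻¹ = 1 := mul_inv_cancel₀ (G₀ := F2 Fq) hx
  refine ⟨x⁻¹, he, ?_⟩
  have hne : x⁻¹ ≠ 0 := right_ne Fq _ _ he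
  have h := vv_mul Fq x x⁻¹ hx hne
  rw [he, vv_one, hv] at h
  have h1 : (0 : ℤ) = 0 + (vv Fq x⁻¹).1 := (Prod.ext_iff.mp h).1
  have h2 : (0 : ℤ) = 0 + (vv Fq x⁻¹).2 := (Prod.ext_iff.mp h).2
  right
  exact lexle_of_scalar _ _ (by simp only [Prod.fst_zero, Prod.snd_zero]; omega)

lemma unit11 (g : Matrix (Fin 2) (Fin 2) (F2 Fq)) (hg : g ∈ Iwahori Fq) :
    g 1 1 ≠ 0 ∧ ∃ e, g 1 1 * e = 1 ∧ e ∈ Oring Fq := by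
  obtain ⟨hdet, hent, y, hyO, hc⟩ := hg
  have had : g 0 0 * g 1 1 - g 0 1 * g 1 0 = 1 := (Matrix.det_fin_two g).symm.trans hdet
  have h1 : g 0 0 * g 1 1 = 1 + g 0 1 * g 1 0 := by linear_combination had
  have hvad : g 0 0 * g 1 1 ≠ 0 ∧ vv Fq (g 0 0 * g 1 1) = (0, 0) := by
    by_cases hbc : g 0 1 * g 1 0 = 0
    · have h1' : g 0 0 * g 1 1 = 1 := by linear_combination h1 + hbc
      refine ⟨by rw [h1']; exact one_ne Fq, by rw [h1']; exact vv_one Fq⟩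
    · obtain ⟨hb0, hc0⟩ := mul_ne' Fq _ _ hbc
      have hy0 : y ≠ 0 := by
        rintro rfl; exact hc0 (hc.trans (mul_zero (t1 Fq)))
      have hvc : vv Fq (g 1 0) = (1, 0) + vv Fq y := by
        rw [hc, vv_mul Fq _ _ (t1_ne Fq) hy0, vv_t1]
      have hvbc : vv Fq (g 0 1 * g 1 0) = vv Fq (g 0 1) + ((1, 0) + vv Fq y) := by
        rw [vv_mul Fq _ _ hb0 hc0, hvc]
      have hbO := (hent 0 1).resolve_left hb0
      have hyO' := hyO.resolve_left hy0
      have hlt : lexlt (0, 0) (vv Fq (g 0 1 * g 1 0)) := by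
        have hb := lexle_scalar _ _ hbO
        have hy := lexle_scalar _ _ hyO'
        refine lexlt_of_scalar _ _ ?_
        rw [hvbc]
        have e1 : (vv Fq (g 0 1) + ((1, 0) + vv Fq y)).1
            = (vv Fq (g 0 1)).1 + (1 + (vv Fq y).1) := rfl
        have e2 : (vv Fq (g 0 1) + ((1, 0) + vv Fq y)).2
            = (vv Fq (g 0 1)).2 + (0 + (vv Fq y).2) := rfl
        rw [e1, e2]
        simp only [Prod.fst_zero, Prod.snd_zero] at *
        omega
      have hone := vv_add_lt Fq 1 (g 0 1 * g 1 0) (one_ne Fq) hbc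
        (by rw [vv_one]; exact hlt)
      refine ⟨by rw [h1]; exact hone.1, ?_⟩
      rw [h1, hone.2, vv_one]
  obtain ⟨hadne, hvad0⟩ := hvad
  obtain ⟨ha0, hd0⟩ := mul_ne' Fq _ _ hadne
  have hsum := vv_mul Fq _ _ ha0 hd0
  rw [hvad0] at hsum
  have hvd : vv Fq (g 1 1) = (0, 0) :=
    lex_unit _ _ ((hent 0 0).resolve_left ha0) ((hent 1 1).resolve_left hd0) hsum.symm
  exact ⟨hd0, o_inv Fq _ hd0 hvd⟩

-- ============ Iwahori lemmas ============

lemma massoc (a b c : Matrix (Fin 2) (Fin 2) (F2 Fq)) : a * b * c = a * (b * c) :=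
  mul_assoc a b c

lemma Iw_one : (1 : Matrix (Fin 2) (Fin 2) (F2 Fq)) ∈ Iwahori Fq := by
  refine ⟨Matrix.det_one, ?_, 0, o_zero Fq, ?_⟩
  · intro i' j'
    by_cases h : i' = j'
    · rw [h, Matrix.one_apply_eq]; exact o_one Fq
    · rw [Matrix.one_apply_ne h]; exact o_zero Fq
  · rw [Matrix.one_apply_ne (by decide)]
    exact (mul_zero (t1 Fq)).symm

lemma Iw_mul (g h : Matrix (Fin 2) (Fin 2) (F2 Fq)) (hg : g ∈ Iwahori Fq)
    (hh : h ∈ Iwahori Fq) : g * h ∈ Iwahori Fq := by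
  obtain ⟨hg1, hg2, y, hyO, hgc⟩ := hg
  obtain ⟨hh1, hh2, z, hzO, hhc⟩ := hh
  have hentry : ∀ i' j', (g * h) i' j' = g i' 0 * h 0 j' + g i' 1 * h 1 j' := by
    intro i' j'
    rw [Matrix.mul_apply, Fin.sum_univ_two]
  refine ⟨?_, ?_, y * h 0 0 + g 1 1 * z, ?_, ?_⟩
  · rw [Matrix.det_mul, hg1, hh1]; exact one_mul (1 : F2 Fq)
  · intro i' j'
    rw [hentry i' j']
    exact o_add Fq _ _ (o_mul Fq _ _ (hg2 i' 0) (hh2 0 j')) (o_mul Fq _ _ (hg2 i' 1) (hh2 1 j'))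
  · exact o_add Fq _ _ (o_mul Fq _ _ hyO (hh2 0 0)) (o_mul Fq _ _ (hg2 1 1) hzO)
  · rw [hentry 1 0]
    linear_combination (h 0 0) * hgc + (g 1 1) * hhc

-- ============ key matrix identity ============

set_option maxHeartbeats 1000000 in
lemma key_identity (g : Matrix (Fin 2) (Fin 2) (F2 Fq)) (e P p Q q : F2 Fq)
    (had : g 0 0 * g 1 1 - g 0 1 * g 1 0 = 1) (hde : g 1 1 * e = 1)
    (hPp : P * p = 1) (hQq : Q * q = 1) :
    !![P, 0; 0, p] * g * !![Q, 0; 0, q] =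
      !![1, g 0 1 * e * (P * P); 0, 1] * !![P * Q, 0; 0, p * q] *
        !![e, 0; g 1 0 * (Q * Q), g 1 1] := by
  set a := g 0 0
  set b := g 0 1
  set c := g 1 0
  set d := g 1 1
  refine Matrix.ext (fun r s => ?_)
  fin_cases r <;> fin_cases s <;>
    simp only [Matrix.mul_apply, Fin.sum_univ_two, Fin.zero_eta, Fin.mk_one,
      Matrix.cons_val', Matrix.cons_val_zero,
      Matrix.cons_val_one, Matrix.head_cons, Matrix.empty_val', Matrix.cons_val_fin_one,
      Matrix.head_fin_const, Matrix.of_apply]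
  · linear_combination (P*Q*e) * had - (P*a*Q) * hde - (b*c*e*P*Q) * hPp - (b*c*e*P*Q*P*p) * hQq
  · linear_combination (0-(P*b*q)) * hde - (P*b*q*d*e) * hPp
  · linear_combination (0-(p*c*Q)) * hQq
  · ring

lemma key (i j k l : ℤ) (hij : lexle (0, 0) (i, j)) (hkl : lexle (0, 0) (k, l))
    (g : Matrix (Fin 2) (Fin 2) (F2 Fq)) (hg : g ∈ Iwahori Fq) :
    eta1 Fq i j * g * eta1 Fq k l ∈ doubleCoset Fq (eta1 Fq (i + k) (j + l)) := by
  obtain ⟨hd0, e, hde, heO⟩ := unit11 Fq g hg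
  obtain ⟨hdet, hent, y, hyO, hc⟩ := hg
  have had : g 0 0 * g 1 1 - g 0 1 * g 1 0 = 1 := (Matrix.det_fin_two g).symm.trans hdet
  -- inverses of the diagonal parameters
  have h1' : t1 Fq ^ i * t1 Fq ^ (-i) = 1 := by
    have h1 := (tpow2 Fq (t1 Fq) (t1_ne Fq) i (-i)).symm
    rw [show i + -i = 0 by ring] at h1
    exact h1.trans (zpow_zero (t1 Fq))
  have h2' : t2 Fq ^ j * t2 Fq ^ (-j) = 1 := by
    have h1 := (tpow2 Fq (t2 Fq) (t2_ne Fq) j (-j)).symm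
    rw [show j + -j = 0 by ring] at h1
    exact h1.trans (zpow_zero (t2 Fq))
  have h3' : t1 Fq ^ k * t1 Fq ^ (-k) = 1 := by
    have h1 := (tpow2 Fq (t1 Fq) (t1_ne Fq) k (-k)).symm
    rw [show k + -k = 0 by ring] at h1
    exact h1.trans (zpow_zero (t1 Fq))
  have h4' : t2 Fq ^ l * t2 Fq ^ (-l) = 1 := by
    have h1 := (tpow2 Fq (t2 Fq) (t2_ne Fq) l (-l)).symm
    rw [show l + -l = 0 by ring] at h1
    exact h1.trans (zpow_zero (t2 Fq))
  have hPp : (t1 Fq ^ i * t2 Fq ^ j) * (t1 Fq ^ (-i) * t2 Fq ^ (-j)) = 1 := by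
    linear_combination (t2 Fq ^ j * t2 Fq ^ (-j)) * h1' + h2'
  have hQq : (t1 Fq ^ k * t2 Fq ^ l) * (t1 Fq ^ (-k) * t2 Fq ^ (-l)) = 1 := by
    linear_combination (t2 Fq ^ l * t2 Fq ^ (-l)) * h3' + h4'
  have hPQ : t1 Fq ^ (i + k) * t2 Fq ^ (j + l)
      = (t1 Fq ^ i * t2 Fq ^ j) * (t1 Fq ^ k * t2 Fq ^ l) := by
    rw [tpow2 Fq _ (t1_ne Fq) i k, tpow2 Fq _ (t2_ne Fq) j l]; ring
  have hpq : t1 Fq ^ (-(i + k)) * t2 Fq ^ (-(j + l))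
      = (t1 Fq ^ (-i) * t2 Fq ^ (-j)) * (t1 Fq ^ (-k) * t2 Fq ^ (-l)) := by
    rw [show -(i + k) = -i + -k by ring, show -(j + l) = -j + -l by ring,
      tpow2 Fq _ (t1_ne Fq) (-i) (-k), tpow2 Fq _ (t2_ne Fq) (-j) (-l)]
    ring
  have e3 : eta1 Fq (i + k) (j + l)
      = !![(t1 Fq ^ i * t2 Fq ^ j) * (t1 Fq ^ k * t2 Fq ^ l), 0; 0,
          (t1 Fq ^ (-i) * t2 Fq ^ (-j)) * (t1 Fq ^ (-k) * t2 Fq ^ (-l))] := by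
    unfold eta1
    rw [hPQ, hpq]
  refine ⟨!![1, g 0 1 * e * ((t1 Fq ^ i * t2 Fq ^ j) * (t1 Fq ^ i * t2 Fq ^ j)); 0, 1], ?_,
    !![e, 0; g 1 0 * ((t1 Fq ^ k * t2 Fq ^ l) * (t1 Fq ^ k * t2 Fq ^ l)), g 1 1], ?_, ?_⟩
  · refine ⟨?_, ?_, 0, o_zero Fq, ?_⟩
    · rw [Matrix.det_fin_two_of]; ring
    · intro r s
      fin_cases r <;> fin_cases s <;>
        simp only [Fin.zero_eta, Fin.mk_one, Matrix.cons_val', Matrix.cons_val_zero,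
          Matrix.cons_val_one, Matrix.head_cons, Matrix.empty_val', Matrix.cons_val_fin_one,
          Matrix.head_fin_const, Matrix.of_apply]
      · exact o_one Fq
      · exact o_mul Fq _ _ (o_mul Fq _ _ (hent 0 1) heO)
          (o_mul Fq _ _ (o_P Fq i j hij) (o_P Fq i j hij))
      · exact o_zero Fq
      · exact o_one Fq
    · simp only [Matrix.cons_val', Matrix.cons_val_zero, Matrix.cons_val_one,
        Matrix.head_cons, Matrix.empty_val', Matrix.cons_val_fin_one, Matrix.head_fin_const,
        Matrix.of_apply]
      exact (mul_zero (t1 Fq)).symm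
  · refine ⟨?_, ?_, y * ((t1 Fq ^ k * t2 Fq ^ l) * (t1 Fq ^ k * t2 Fq ^ l)), ?_, ?_⟩
    · rw [Matrix.det_fin_two_of]; linear_combination hde
    · intro r s
      fin_cases r <;> fin_cases s <;>
        simp only [Fin.zero_eta, Fin.mk_one, Matrix.cons_val', Matrix.cons_val_zero,
          Matrix.cons_val_one, Matrix.head_cons, Matrix.empty_val', Matrix.cons_val_fin_one,
          Matrix.head_fin_const, Matrix.of_apply]
      · exact heO
      · exact o_zero Fq
      · exact o_mul Fq _ _ (hent 1 0)
          (o_mul Fq _ _ (o_P Fq k l hkl) (o_P Fq k l hkl))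
      · exact hent 1 1
    · exact o_mul Fq _ _ hyO (o_mul Fq _ _ (o_P Fq k l hkl) (o_P Fq k l hkl))
    · simp only [Matrix.cons_val', Matrix.cons_val_zero, Matrix.cons_val_one,
        Matrix.head_cons, Matrix.empty_val', Matrix.cons_val_fin_one, Matrix.head_fin_const,
        Matrix.of_apply]
      linear_combination ((t1 Fq ^ k * t2 Fq ^ l) * (t1 Fq ^ k * t2 Fq ^ l)) * hc
  · rw [e3]
    exact key_identity Fq g e _ _ _ _ had hde hPp hQq

lemma eta_split (i j k l : ℤ) :
    eta1 Fq (i + k) (j + l) = eta1 Fq i j * eta1 Fq k l := by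
  have hPQ : t1 Fq ^ (i + k) * t2 Fq ^ (j + l)
      = (t1 Fq ^ i * t2 Fq ^ j) * (t1 Fq ^ k * t2 Fq ^ l) := by
    rw [tpow2 Fq _ (t1_ne Fq) i k, tpow2 Fq _ (t2_ne Fq) j l]; ring
  have hpq : t1 Fq ^ (-(i + k)) * t2 Fq ^ (-(j + l))
      = (t1 Fq ^ (-i) * t2 Fq ^ (-j)) * (t1 Fq ^ (-k) * t2 Fq ^ (-l)) := by
    rw [show -(i + k) = -i + -k by ring, show -(j + l) = -j + -l by ring,
      tpow2 Fq _ (t1_ne Fq) (-i) (-k), tpow2 Fq _ (t2_ne Fq) (-j) (-l)]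
    ring
  unfold eta1
  refine Matrix.ext (fun r s => ?_)
  fin_cases r <;> fin_cases s <;>
    simp only [Matrix.mul_apply, Fin.sum_univ_two, Fin.zero_eta, Fin.mk_one,
      Matrix.cons_val', Matrix.cons_val_zero, Matrix.cons_val_one, Matrix.head_cons,
      Matrix.empty_val', Matrix.cons_val_fin_one, Matrix.head_fin_const, Matrix.of_apply]
  · linear_combination hPQ
  · ring
  · ring
  · linear_combination hpq


open Pointwise in
/-- For `(i,j) ≥ (0,0)` and `(k,l) ≥ (0,0)`:
`(I·η^{(1)}_{i,j}·I)·(I·η^{(1)}_{k,l}·I) = I·η^{(1)}_{i+k,j+l}·I`. -/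
theorem product_diag_diag (Fq : Type) [Field Fq] [Fintype Fq] (i j k l : ℤ)
    (hij : lexle (0, 0) (i, j)) (hkl : lexle (0, 0) (k, l)) :
    doubleCoset Fq (eta1 Fq i j) * doubleCoset Fq (eta1 Fq k l) =
      doubleCoset Fq (eta1 Fq (i + k) (j + l)) := by

  ext x
  simp only [Set.mem_mul]
  constructor
  · rintro ⟨u, hu, v, hv, rfl⟩
    obtain ⟨g1, hg1, h1, hh1, rfl⟩ := hu
    obtain ⟨g2, hg2, h2, hh2, rfl⟩ := hv
    obtain ⟨A, hA, B, hB, hEq⟩ := key Fq i j k l hij hkl (h1 * g2) (Iw_mul Fq _ _ hh1 hg2)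
    refine ⟨g1 * A, Iw_mul Fq _ _ hg1 hA, B * h2, Iw_mul Fq _ _ hB hh2, ?_⟩
    have hEq2 : g1 * (eta1 Fq i j * (h1 * g2) * eta1 Fq k l) * h2
        = g1 * (A * eta1 Fq (i + k) (j + l) * B) * h2 := by rw [hEq]
    calc g1 * eta1 Fq i j * h1 * (g2 * eta1 Fq k l * h2)
        = g1 * (eta1 Fq i j * (h1 * g2) * eta1 Fq k l) * h2 := by
          simp only [massoc]
      _ = g1 * (A * eta1 Fq (i + k) (j + l) * B) * h2 := hEq2
      _ = g1 * A * eta1 Fq (i + k) (j + l) * (B * h2) := by simp only [massoc]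
  · rintro ⟨g, hg, h, hh, rfl⟩
    refine ⟨g * eta1 Fq i j, ⟨g, hg, 1, Iw_one Fq, (mul_one _).symm⟩,
      eta1 Fq k l * h, ⟨1, Iw_one Fq, h, hh, ?_⟩, ?_⟩
    · exact congrArg (· * h) (one_mul (eta1 Fq k l)).symm
    · rw [eta_split Fq i j k l]
      simp only [massoc]
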